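/- Suppose piecewise-constant weights ξ_{ij}(·) are constant on each interval [mτ/n, (m+1)τ/n), and for every m ≥ 0 the averaged weights ξ̄^m_{ij} := (1/n)Σ_{k=0}^{n−1} ξ_{ij}((m+k)τ/n) define a graph whose Laplacian satisfies B(L_{ξ̄^m} v, v) ≥ μ B(v,v) for all v. Then for every t ≥ 0, B((1/τ)∫_t^{t+τ} L_ξ(s) ds · v, v) ≥ (μ/2) B(v,v) for all v ∈ (ℝ^d)^N; that is, the persistence condition holds with constant μ/2. -/

import Mathlib

/-!
Put `h = τ / n` and pick `m` with `t ∈ [m h, (m + 1) h)`. Over the window `[t, t + τ]` the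
weights are those of piece `m` for a time `α = (m + 1) h - t`, of pieces `m + 1, …, m + n - 1`
for a time `h` each, and of piece `m + n` for a time `β = t - m h`. Every `B(L_ξ v, v)` equals
`(2N²)⁻¹ Σ ξ_ij ‖v_i - v_j‖² ≥ 0`, and one of `α, β` is at least `h / 2` because `α + β = h`;
so the window integral of `B(L_ξ(s) v, v)` dominates `h / 2` times its sum over the `n` pieces
starting at `m` or at `m + 1`, that is, `τ / 2` times an averaged Laplacian.
-/

open Finset

noncomputable def Bvar {N d : ℕ} (x y : Fin N → EuclideanSpace ℝ (Fin d)) : ℝ :=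
  (N : ℝ)⁻¹ * ∑ i, (inner ℝ (x i) (y i) : ℝ) -
    (inner ℝ ((N : ℝ)⁻¹ • ∑ i, x i) ((N : ℝ)⁻¹ • ∑ i, y i) : ℝ)

noncomputable def lap {N d : ℕ} (a : Fin N → Fin N → ℝ)
    (y : Fin N → EuclideanSpace ℝ (Fin d)) : Fin N → EuclideanSpace ℝ (Fin d) :=
  fun i => (N : ℝ)⁻¹ • ∑ j, a i j • (y i - y j)

theorem Finset.sum_sum_eq_zero_of_antisymm {ι M : Type*} [Fintype ι] [AddCommGroup M]
    [Module ℝ M] {f : ι → ι → M} (hf : ∀ i j, f j i = -f i j) :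
    ∑ i, ∑ j, f i j = 0 := by
  have hneg : ∑ i, ∑ j, f i j = -∑ i, ∑ j, f i j := by
    refine Finset.sum_comm.trans ?_
    rw [← Finset.sum_neg_distrib]
    exact Finset.sum_congr rfl fun i _ => by
      rw [← Finset.sum_neg_distrib]
      exact Finset.sum_congr rfl fun j _ => hf i j
  have htwo : (2 : ℝ) • ∑ i, ∑ j, f i j = 0 := by
    rw [two_smul]
    nth_rw 2 [hneg]
    exact add_neg_cancel _
  exact (smul_eq_zero.mp htwo).resolve_left two_ne_zero

section Laplacian

variable {N d : ℕ}

noncomputable def bvarLeft (y : Fin N → EuclideanSpace ℝ (Fin d)) :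
    (Fin N → EuclideanSpace ℝ (Fin d)) →ₗ[ℝ] ℝ where
  toFun x := Bvar x y
  map_add' x x' := by
    simp only [Bvar, Pi.add_apply, inner_add_left, sum_add_distrib, smul_add]
    ring
  map_smul' r x := by
    simp only [Bvar, Pi.smul_apply, real_inner_smul_left, ← smul_sum, smul_comm (N : ℝ)⁻¹ r,
      ← mul_sum, RingHom.id_apply, smul_eq_mul]
    ring

@[simp]
theorem bvarLeft_apply (x y : Fin N → EuclideanSpace ℝ (Fin d)) : bvarLeft y x = Bvar x y := rfl

noncomputable def lapLeft (v : Fin N → EuclideanSpace ℝ (Fin d)) :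
    (Fin N → Fin N → ℝ) →ₗ[ℝ] (Fin N → EuclideanSpace ℝ (Fin d)) where
  toFun a := lap a v
  map_add' a b := by
    ext1 i
    simp only [lap, Pi.add_apply, add_smul, sum_add_distrib, smul_add]
  map_smul' r a := by
    ext1 i
    simp only [lap, Pi.smul_apply, smul_eq_mul, mul_smul, ← smul_sum, RingHom.id_apply]
    rw [smul_comm]

theorem sum_lap_eq_zero {a : Fin N → Fin N → ℝ} (ha : ∀ i j, a i j = a j i)
    (v : Fin N → EuclideanSpace ℝ (Fin d)) : ∑ i, lap a v i = 0 := by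
  simp only [lap, ← smul_sum]
  rw [sum_sum_eq_zero_of_antisymm fun i j => by rw [ha, ← smul_neg, neg_sub], smul_zero]

theorem Bvar_lap_self {a : Fin N → Fin N → ℝ} (ha : ∀ i j, a i j = a j i)
    (v : Fin N → EuclideanSpace ℝ (Fin d)) :
    Bvar (lap a v) v = (2 * (N : ℝ) ^ 2)⁻¹ * ∑ i, ∑ j, a i j * ‖v i - v j‖ ^ 2 := by
  have hpolar : ∀ i j, 2 * (a i j * inner ℝ (v i - v j) (v i)) =
      a i j * ‖v i - v j‖ ^ 2 + a i j * (‖v i‖ ^ 2 - ‖v j‖ ^ 2) := by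
    intro i j
    rw [← real_inner_self_eq_norm_sq, ← real_inner_self_eq_norm_sq, ← real_inner_self_eq_norm_sq]
    simp only [inner_sub_left, inner_sub_right, real_inner_comm (v i) (v j)]
    ring
  have hzero : ∑ i, ∑ j, a i j * (‖v i‖ ^ 2 - ‖v j‖ ^ 2) = 0 :=
    sum_sum_eq_zero_of_antisymm fun i j => by rw [ha]; ring
  have hsum : 2 * ∑ i, ∑ j, a i j * inner ℝ (v i - v j) (v i) =
      ∑ i, ∑ j, a i j * ‖v i - v j‖ ^ 2 := by
    simp only [mul_sum, hpolar, sum_add_distrib, hzero, add_zero]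
  rw [Bvar, sum_lap_eq_zero ha, smul_zero, inner_zero_left, sub_zero, ← hsum]
  simp only [lap, real_inner_smul_left, sum_inner, ← mul_sum]
  ring

theorem Bvar_lap_self_nonneg {a : Fin N → Fin N → ℝ} (ha : ∀ i j, a i j = a j i)
    (ha₀ : ∀ i j, 0 ≤ a i j) (v : Fin N → EuclideanSpace ℝ (Fin d)) :
    0 ≤ Bvar (lap a v) v := by
  rw [Bvar_lap_self ha]
  exact mul_nonneg (by positivity) (sum_nonneg fun i _ => sum_nonneg fun j _ =>
    mul_nonneg (ha₀ i j) (by positivity))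

theorem Bvar_lap_mul_sum {ι : Type*} (s : Finset ι) (c : ℝ) (a : ι → Fin N → Fin N → ℝ)
    (v : Fin N → EuclideanSpace ℝ (Fin d)) :
    Bvar (lap (fun i j => c * ∑ k ∈ s, a k i j) v) v = c * ∑ k ∈ s, Bvar (lap (a k) v) v := by
  have hfun : (fun i j => c * ∑ k ∈ s, a k i j) = c • ∑ k ∈ s, a k := by
    ext i j
    simp only [Pi.smul_apply, Finset.sum_apply, smul_eq_mul]
  rw [hfun]
  change (bvarLeft v).comp (lapLeft v) (c • ∑ k ∈ s, a k) = _
  rw [map_smul, map_sum]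
  rfl

end Laplacian

open MeasureTheory

section StepFunction

variable {E : Type*} {F : ℝ → E} {h : ℝ}

def IsPiecewiseConst (h : ℝ) (F : ℝ → E) : Prop :=
  ∀ m : ℕ, ∀ s ∈ Set.Ico (m * h) ((m + 1) * h), F s = F (m * h)

theorem IsPiecewiseConst.eqOn_Ico (hF : IsPiecewiseConst h F) {m : ℕ} {a b : ℝ}
    (ha : m * h ≤ a) (hb : b ≤ (m + 1) * h) : Set.EqOn F (fun _ => F (m * h)) (Set.Ico a b) :=
  fun s hs => hF m s ⟨ha.trans hs.1, hs.2.trans_le hb⟩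

theorem IsPiecewiseConst.eqOn_mesh (hF : IsPiecewiseConst h F) (j k : ℕ) :
    Set.EqOn F (fun _ => F ((j + k : ℕ) * h))
      (Set.Ico ((j + k : ℕ) * h) ((j + (k + 1) : ℕ) * h)) :=
  hF.eqOn_Ico le_rfl (le_of_eq (by push_cast; ring))

variable [NormedAddCommGroup E]

theorem intervalIntegrable_of_eqOn_Ico {a b : ℝ} {c : E} (hab : a ≤ b)
    (hF : Set.EqOn F (fun _ => c) (Set.Ico a b)) : IntervalIntegrable F volume a b :=
  intervalIntegrable_const.congr_uIoo fun _ hs =>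
    (hF (Set.Ioo_subset_Ico_self (Set.uIoo_of_le hab ▸ hs))).symm

theorem IsPiecewiseConst.intervalIntegrable_mesh_succ (hF : IsPiecewiseConst h F) (hh : 0 ≤ h)
    (j k : ℕ) : IntervalIntegrable F volume ((j + k : ℕ) * h) ((j + (k + 1) : ℕ) * h) :=
  intervalIntegrable_of_eqOn_Ico (mul_le_mul_of_nonneg_right (Nat.cast_le.2 (by omega)) hh)
    (hF.eqOn_mesh j k)

theorem IsPiecewiseConst.intervalIntegrable_mesh (hF : IsPiecewiseConst h F) (hh : 0 ≤ h)
    (j p : ℕ) : IntervalIntegrable F volume (j * h) ((j + p : ℕ) * h) :=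
  IntervalIntegrable.trans_iterate (a := fun k => ((j + k : ℕ) : ℝ) * h) fun k _ =>
    hF.intervalIntegrable_mesh_succ hh j k

variable [NormedSpace ℝ E] [CompleteSpace E]

theorem integral_of_eqOn_Ico {a b : ℝ} {c : E} (hab : a ≤ b)
    (hF : Set.EqOn F (fun _ => c) (Set.Ico a b)) : ∫ s in a..b, F s = (b - a) • c := by
  rw [intervalIntegral.integral_congr_Ioo_of_le hab (hF.mono Set.Ioo_subset_Ico_self),
    intervalIntegral.integral_const]

theorem IsPiecewiseConst.integral_mesh (hF : IsPiecewiseConst h F) (hh : 0 ≤ h) (j p : ℕ) :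
    ∫ s in j * h..(j + p : ℕ) * h, F s = h • ∑ k ∈ range p, F ((j + k : ℕ) * h) := by
  refine (intervalIntegral.sum_integral_adjacent_intervals (a := fun k => ((j + k : ℕ) : ℝ) * h)
    fun k _ => hF.intervalIntegrable_mesh_succ hh j k).symm.trans ?_
  rw [smul_sum]
  refine sum_congr rfl fun k _ => ?_
  rw [integral_of_eqOn_Ico (mul_le_mul_of_nonneg_right (Nat.cast_le.2 (by omega)) hh)
    (hF.eqOn_mesh j k)]
  congr 1
  push_cast
  ring

theorem IsPiecewiseConst.integral_window (hF : IsPiecewiseConst h F) (hh : 0 < h) {m : ℕ}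
    {t : ℝ} (ht : m * h ≤ t) (ht' : t < (m + 1) * h) (p : ℕ) :
    ∫ s in t..t + (p + 1) * h, F s = ((m + 1) * h - t) • F (m * h) +
      h • ∑ k ∈ range p, F ((m + 1 + k : ℕ) * h) + (t - m * h) • F ((m + 1 + p : ℕ) * h) := by
  have hhead : Set.EqOn F (fun _ => F (m * h)) (Set.Ico t ((m + 1 : ℕ) * h)) :=
    hF.eqOn_Ico ht (le_of_eq (by push_cast; rfl))
  have htail : Set.EqOn F (fun _ => F ((m + 1 + p : ℕ) * h))
      (Set.Ico ((m + 1 + p : ℕ) * h) (t + (p + 1) * h)) :=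
    hF.eqOn_Ico le_rfl (by push_cast; linarith)
  have hle_head : t ≤ (m + 1 : ℕ) * h := by push_cast; linarith
  have hle_tail : ((m + 1 + p : ℕ) : ℝ) * h ≤ t + (p + 1) * h := by push_cast; linarith
  have hint_head := intervalIntegrable_of_eqOn_Ico hle_head hhead
  have hint_mid := hF.intervalIntegrable_mesh hh.le (m + 1) p
  rw [← intervalIntegral.integral_add_adjacent_intervals (hint_head.trans hint_mid)
      (intervalIntegrable_of_eqOn_Ico hle_tail htail),
    ← intervalIntegral.integral_add_adjacent_intervals hint_head hint_mid,
    integral_of_eqOn_Ico hle_head hhead, hF.integral_mesh hh.le,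
    integral_of_eqOn_Ico hle_tail htail]
  have hα : ((m + 1 : ℕ) : ℝ) * h - t = (m + 1) * h - t := by push_cast; ring
  have hβ : t + (p + 1) * h - ((m + 1 + p : ℕ) : ℝ) * h = t - m * h := by push_cast; ring
  rw [hα, hβ]

end StepFunction

theorem half_mul_le_window_sum {y : ℕ → ℝ} (hy : ∀ k, 0 ≤ y k) {α β h c : ℝ} (hα : 0 ≤ α)
    (hβ : 0 ≤ β) (hαβ : α + β = h) {m p : ℕ} (h₀ : c ≤ ∑ k ∈ range (p + 1), y (m + k))
    (h₁ : c ≤ ∑ k ∈ range (p + 1), y (m + 1 + k)) :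
    h / 2 * c ≤ α * y m + h * ∑ k ∈ range p, y (m + 1 + k) + β * y (m + 1 + p) := by
  set S := ∑ k ∈ range p, y (m + 1 + k)
  have hS : 0 ≤ S := sum_nonneg fun k _ => hy _
  have hsplit : ∑ k ∈ range (p + 1), y (m + k) = y m + S := by
    rw [sum_range_succ', add_comm]
    exact congrArg _ (sum_congr rfl fun k _ => by rw [← add_assoc, add_right_comm])
  rw [hsplit] at h₀
  rw [sum_range_succ] at h₁
  rcases le_total (h / 2) α with hα' | hβ'
  · nlinarith [mul_nonneg (sub_nonneg.2 hα') (hy m), mul_nonneg hβ (hy (m + 1 + p))]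
  · nlinarith [mul_nonneg (sub_nonneg.2 (by linarith : h / 2 ≤ β)) (hy (m + 1 + p)),
      mul_nonneg hα (hy m)]

theorem stmt19_general (N d : ℕ) (n : ℕ) (hn : 1 ≤ n) (τ μ : ℝ)
    (hτ : 0 < τ)
    (ξ : ℝ → Fin N → Fin N → ℝ)
    (hξsymm : ∀ t i j, ξ t i j = ξ t j i)
    (hξrange : ∀ t i j, ξ t i j ∈ Set.Icc (0 : ℝ) 1)
    -- ξ is constant on each interval [mτ/n, (m+1)τ/n)
    (hpc : ∀ m : ℕ, ∀ s ∈ Set.Ico ((m : ℝ) * τ / n) (((m : ℝ) + 1) * τ / n),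
      ξ s = ξ ((m : ℝ) * τ / n))
    -- each averaged graph over n consecutive intervals has B-connectivity ≥ μ
    (havg : ∀ m : ℕ, ∀ v : Fin N → EuclideanSpace ℝ (Fin d),
      μ * Bvar v v ≤
        Bvar (lap (fun i j => (n : ℝ)⁻¹ * ∑ k ∈ Finset.range n,
          ξ (((m + k : ℕ) : ℝ) * τ / n) i j) v) v) :
    ∀ t : ℝ, 0 ≤ t → ∀ v : Fin N → EuclideanSpace ℝ (Fin d),
      (μ / 2) * Bvar v v ≤
        Bvar (τ⁻¹ • ∫ s in t..(t + τ), lap (ξ s) v) v := by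
  intro t ht v
  obtain ⟨p, rfl⟩ : ∃ p, n = p + 1 := ⟨n - 1, by omega⟩
  simp only [mul_div_assoc] at hpc havg
  set h := τ / ((p + 1 : ℕ) : ℝ)
  have hh : 0 < h := by positivity
  have hτh : τ = (p + 1) * h := by push_cast [h]; field_simp
  set y : ℕ → ℝ := fun k => Bvar (lap (ξ (k * h)) v) v
  have hy (k : ℕ) : 0 ≤ y k :=
    Bvar_lap_self_nonneg (hξsymm _) (fun i j => (hξrange _ i j).1) v
  have hyavg (m : ℕ) : ((p + 1 : ℕ) : ℝ) * (μ * Bvar v v) ≤ ∑ k ∈ range (p + 1), y (m + k) := by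
    have := havg m v
    rw [Bvar_lap_mul_sum] at this
    exact (le_inv_mul_iff₀ (by positivity)).1 this
  have hF : IsPiecewiseConst h (fun s => lap (ξ s) v) := fun m s hs =>
    congrArg (fun a => lap a v) (hpc m s hs)
  obtain ⟨m, hm, hm'⟩ : ∃ m : ℕ, m * h ≤ t ∧ t < (m + 1) * h :=
    ⟨⌊t / h⌋₊, (le_div_iff₀ hh).1 (Nat.floor_le (div_nonneg ht hh.le)),
      (div_lt_iff₀ hh).1 (Nat.lt_floor_add_one _)⟩
  have hcomb := half_mul_le_window_sum hy (α := (m + 1) * h - t) (β := t - m * h) (h := h)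
    (by linarith) (by linarith) (by ring) (hyavg m) (hyavg (m + 1))
  rw [hτh, hF.integral_window hh hm hm']
  change _ ≤ bvarLeft v _
  simp only [map_smul, map_add, map_sum, smul_eq_mul, bvarLeft_apply]
  rw [le_inv_mul_iff₀ (by positivity)]
  calc (p + 1) * h * (μ / 2 * Bvar v v) = h / 2 * (((p + 1 : ℕ) : ℝ) * (μ * Bvar v v)) := by
        push_cast; ring
    _ ≤ _ := hcomb

theorem stmt19 (N d : ℕ) (hN : 1 ≤ N) (n : ℕ) (hn : 1 ≤ n) (τ μ : ℝ)
    (hτ : 0 < τ) (hμ : 0 < μ)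
    (ξ : ℝ → Fin N → Fin N → ℝ)
    (hξsymm : ∀ t i j, ξ t i j = ξ t j i)
    (hξrange : ∀ t i j, ξ t i j ∈ Set.Icc (0 : ℝ) 1)
    -- ξ is constant on each interval [mτ/n, (m+1)τ/n)
    (hpc : ∀ m : ℕ, ∀ s ∈ Set.Ico ((m : ℝ) * τ / n) (((m : ℝ) + 1) * τ / n),
      ξ s = ξ ((m : ℝ) * τ / n))
    -- each averaged graph over n consecutive intervals has B-connectivity ≥ μ
    (havg : ∀ m : ℕ, ∀ v : Fin N → EuclideanSpace ℝ (Fin d),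
      μ * Bvar v v ≤
        Bvar (lap (fun i j => (n : ℝ)⁻¹ * ∑ k ∈ Finset.range n,
          ξ (((m + k : ℕ) : ℝ) * τ / n) i j) v) v) :
    ∀ t : ℝ, 0 ≤ t → ∀ v : Fin N → EuclideanSpace ℝ (Fin d),
      (μ / 2) * Bvar v v ≤
        Bvar (τ⁻¹ • ∫ s in t..(t + τ), lap (ξ s) v) v :=
  stmt19_general N d n hn τ μ hτ ξ hξsymm hξrange hpc havg
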